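/- arXiv:2603.08753 — 2 statements merged into one kernel-verified Lean document; each statement's English description precedes it below -/
import Mathlib

section
/- Let C, d, m, p ≥ 1, let A ∈ ℝ^{d×d}, A_ψ ∈ ℝ^{d×m}, B ∈ ℝ^{d×p} be matrices shared across all variables, and let ψ : (ℝ^d)^C → ℝ^m be permutation-invariant (ψ(v ∘ σ) = ψ(v) for all permutations σ) and globally Lipschitz. Let x : ℝ × {1,…,C} → ℝ^p be continuous in t, fix T > 0 and a permutation π of {1,…,C}. Suppose h₁, h₂ : [0,T] × {1,…,C} → ℝ^d both satisfy the dynamics ∂h(t,c)/∂t = A h(t,c) + A_ψ ψ(h(t,·)) + B u(t,c) on [0,T], where h₁ uses input u = x with initial states h₁(0,c), and h₂ uses the permuted input u(t,c) = x(t,π(c)) with permuted initial states h₂(0,c) = h₁(0,π(c)). Then h₂(t,c) = h₁(t,π(c)) for all t ∈ [0,T] and all c; i.e., the dynamics are permutation-equivariant with respect to the variable axis. -/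
/-!
Relabelling the variables of a solution `h₁` by `π` gives a curve `c ↦ h₁ t (π c)` which, because
`ψ` does not see the labelling, solves the same ODE as `h₂`: the input permuted by `π` and the same
initial state. The right-hand side is Lipschitz in the state uniformly in time, so the two
solutions coincide by Gronwall-type uniqueness.
-/

open Set Matrix
open scoped NNReal

theorem LipschitzWith.pi {α ι : Type*} [PseudoEMetricSpace α] [Fintype ι] {β : ι → Type*}
    [∀ i, PseudoEMetricSpace (β i)] {K : ℝ≥0} {f : α → ∀ i, β i}
    (hf : ∀ i, LipschitzWith K (fun a => f a i)) : LipschitzWith K f :=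
  fun a b => edist_pi_le_iff.2 fun i => hf i a b

theorem Matrix.lipschitzWith_mulVec {m n : Type*} [Fintype m] [Fintype n] (A : Matrix m n ℝ) :
    LipschitzWith ‖A.mulVecLin.toContinuousLinearMap‖₊ (A *ᵥ ·) :=
  A.mulVecLin.toContinuousLinearMap.lipschitz

section CoupledField

variable {ι n k q : Type*} [Fintype n] [Fintype k] [Fintype q]

def coupledField (A : Matrix n n ℝ) (Aψ : Matrix n k ℝ) (B : Matrix n q ℝ)
    (ψ : (ι → n → ℝ) → k → ℝ) (u : ι → q → ℝ) (h : ι → n → ℝ) : ι → n → ℝ :=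
  fun c => A *ᵥ h c + Aψ *ᵥ ψ h + B *ᵥ u c

theorem exists_lipschitzWith_coupledField [Fintype ι] (A : Matrix n n ℝ) (Aψ : Matrix n k ℝ)
    (B : Matrix n q ℝ) {ψ : (ι → n → ℝ) → k → ℝ} {L : ℝ≥0} (hψ : LipschitzWith L ψ) :
    ∃ K, ∀ u, LipschitzWith K (coupledField A Aψ B ψ u) :=
  ⟨_, fun u => LipschitzWith.pi fun c =>
    ((A.lipschitzWith_mulVec.comp (LipschitzWith.eval c)).add
      (Aψ.lipschitzWith_mulVec.comp hψ)).add (LipschitzWith.const (B *ᵥ u c))⟩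

theorem coupledField_comp_perm (A : Matrix n n ℝ) (Aψ : Matrix n k ℝ) (B : Matrix n q ℝ)
    {ψ : (ι → n → ℝ) → k → ℝ} {π : Equiv.Perm ι} (hψ : ∀ h, ψ (fun c => h (π c)) = ψ h)
    (u : ι → q → ℝ) (h : ι → n → ℝ) :
    coupledField A Aψ B ψ (fun c => u (π c)) (fun c => h (π c)) =
      fun c => coupledField A Aψ B ψ u h (π c) := by
  unfold coupledField
  rw [hψ]

end CoupledField

theorem eqOn_Icc_of_hasDerivWithinAt_Icc {E : Type*} [NormedAddCommGroup E] [NormedSpace ℝ E]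
    {v : ℝ → E → E} {K : ℝ≥0} {f g : ℝ → E} {a b : ℝ} (hv : ∀ t, LipschitzWith K (v t))
    (hf : ∀ t ∈ Icc a b, HasDerivWithinAt f (v t (f t)) (Icc a b) t)
    (hg : ∀ t ∈ Icc a b, HasDerivWithinAt g (v t (g t)) (Icc a b) t) (ha : f a = g a) :
    EqOn f g (Icc a b) :=
  ODE_solution_unique hv (fun t ht => (hf t ht).continuousWithinAt)
    (fun t ht => (hf t (Ico_subset_Icc_self ht)).mono_of_mem_nhdsWithin (Icc_mem_nhdsGE_of_mem ht))
    (fun t ht => (hg t ht).continuousWithinAt)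
    (fun t ht => (hg t (Ico_subset_Icc_self ht)).mono_of_mem_nhdsWithin (Icc_mem_nhdsGE_of_mem ht))
    ha

theorem stmt17_general (C d m p : ℕ)
    (A : Matrix (Fin d) (Fin d) ℝ) (Aψ : Matrix (Fin d) (Fin m) ℝ)
    (B : Matrix (Fin d) (Fin p) ℝ)
    (ψ : (Fin C → (Fin d → ℝ)) → (Fin m → ℝ))
    (hψ : ∀ (σ : Equiv.Perm (Fin C)) (v : Fin C → (Fin d → ℝ)),
      ψ (fun c => v (σ c)) = ψ v)
    (hLip : ∃ L : ℝ, 0 ≤ L ∧ ∀ v w : Fin C → (Fin d → ℝ),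
      ‖ψ v - ψ w‖ ≤ L * ‖v - w‖)
    (x : ℝ → Fin C → (Fin p → ℝ))
    (T : ℝ) (π : Equiv.Perm (Fin C))
    (h₁ h₂ : ℝ → Fin C → (Fin d → ℝ))
    (hode₁ : ∀ (c : Fin C), ∀ t ∈ Set.Icc (0 : ℝ) T,
      HasDerivWithinAt (fun s => h₁ s c)
        (A.mulVec (h₁ t c) + Aψ.mulVec (ψ (h₁ t)) + B.mulVec (x t c))
        (Set.Icc (0 : ℝ) T) t)
    (hode₂ : ∀ (c : Fin C), ∀ t ∈ Set.Icc (0 : ℝ) T,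
      HasDerivWithinAt (fun s => h₂ s c)
        (A.mulVec (h₂ t c) + Aψ.mulVec (ψ (h₂ t)) + B.mulVec (x t (π c)))
        (Set.Icc (0 : ℝ) T) t)
    (hinit : ∀ c : Fin C, h₂ 0 c = h₁ 0 (π c)) :
    ∀ t ∈ Set.Icc (0 : ℝ) T, ∀ c : Fin C, h₂ t c = h₁ t (π c) := by
  obtain ⟨L, -, hLψ⟩ := hLip
  have hψL : LipschitzWith L.toNNReal ψ :=
    LipschitzWith.of_dist_le' fun v w => by simpa only [dist_eq_norm] using hLψ v w
  obtain ⟨K, hK⟩ := exists_lipschitzWith_coupledField A Aψ B hψL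
  have hsol₂ : ∀ t ∈ Icc 0 T, HasDerivWithinAt h₂
      (coupledField A Aψ B ψ (fun c => x t (π c)) (h₂ t)) (Icc 0 T) t :=
    fun t ht => hasDerivWithinAt_pi.2 fun c => hode₂ c t ht
  have hsol₁ : ∀ t ∈ Icc 0 T,
      HasDerivWithinAt (fun s c => h₁ s (π c))
        (coupledField A Aψ B ψ (fun c => x t (π c)) fun c => h₁ t (π c)) (Icc 0 T) t := by
    intro t ht
    rw [coupledField_comp_perm A Aψ B (hψ π)]
    exact hasDerivWithinAt_pi.2 fun c => hode₁ (π c) t ht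
  intro t ht c
  exact congrFun (eqOn_Icc_of_hasDerivWithinAt_Icc (fun t => hK _) hsol₂ hsol₁ (funext hinit) ht) c

theorem stmt17 (C d m p : ℕ) (hC : 1 ≤ C) (hd : 1 ≤ d) (hm : 1 ≤ m) (hp : 1 ≤ p)
    (A : Matrix (Fin d) (Fin d) ℝ) (Aψ : Matrix (Fin d) (Fin m) ℝ)
    (B : Matrix (Fin d) (Fin p) ℝ)
    (ψ : (Fin C → (Fin d → ℝ)) → (Fin m → ℝ))
    (hψ : ∀ (σ : Equiv.Perm (Fin C)) (v : Fin C → (Fin d → ℝ)),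
      ψ (fun c => v (σ c)) = ψ v)
    (hLip : ∃ L : ℝ, 0 ≤ L ∧ ∀ v w : Fin C → (Fin d → ℝ),
      ‖ψ v - ψ w‖ ≤ L * ‖v - w‖)
    (x : ℝ → Fin C → (Fin p → ℝ)) (hx : ∀ c : Fin C, Continuous (fun t => x t c))
    (T : ℝ) (hT : 0 < T) (π : Equiv.Perm (Fin C))
    (h₁ h₂ : ℝ → Fin C → (Fin d → ℝ))
    (hode₁ : ∀ (c : Fin C), ∀ t ∈ Set.Icc (0 : ℝ) T,
      HasDerivWithinAt (fun s => h₁ s c)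
        (A.mulVec (h₁ t c) + Aψ.mulVec (ψ (h₁ t)) + B.mulVec (x t c))
        (Set.Icc (0 : ℝ) T) t)
    (hode₂ : ∀ (c : Fin C), ∀ t ∈ Set.Icc (0 : ℝ) T,
      HasDerivWithinAt (fun s => h₂ s c)
        (A.mulVec (h₂ t c) + Aψ.mulVec (ψ (h₂ t)) + B.mulVec (x t (π c)))
        (Set.Icc (0 : ℝ) T) t)
    (hinit : ∀ c : Fin C, h₂ 0 c = h₁ 0 (π c)) :
    ∀ t ∈ Set.Icc (0 : ℝ) T, ∀ c : Fin C, h₂ t c = h₁ t (π c) :=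
  stmt17_general C d m p A Aψ B ψ hψ hLip x T π h₁ h₂ hode₁ hode₂ hinit
end

section
/- Let C ≥ 1 and let T : ℝ^C → ℝ^C be a linear map. Then T is permutation-equivariant, i.e., T(v ∘ σ) = (T v) ∘ σ for every permutation σ of {1,…,C} and every v ∈ ℝ^C, if and only if there exist scalars α, β ∈ ℝ such that (T v)_c = α v_c + β Σ_{j=1}^C v_j for every v ∈ ℝ^C and every index c. In particular, any linear permutation-equivariant state coupling decomposes into local self-dynamics (the α term) and a global pooled interaction (the β term). -/
theorem stmt18 (C : ℕ) (hC : 1 ≤ C) (T : (Fin C → ℝ) →ₗ[ℝ] (Fin C → ℝ)) :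
    (∀ (σ : Equiv.Perm (Fin C)) (v : Fin C → ℝ),
        T (fun c => v (σ c)) = fun c => T v (σ c)) ↔
      ∃ α β : ℝ, ∀ (v : Fin C → ℝ) (c : Fin C),
        T v c = α * v c + β * ∑ j : Fin C, v j := by
  constructor
  · intro h
    have key : ∀ (σ : Equiv.Perm (Fin C)) (i c : Fin C),
        T (Pi.single i 1) c = T (Pi.single (σ i) 1) (σ c) := by
      intro σ i c
      have hv : (fun x => (Pi.single (σ i) 1 : Fin C → ℝ) (σ x)) = (Pi.single i 1 : Fin C → ℝ) := by
        funext x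
        by_cases hx : x = i
        · subst hx; simp
        · rw [Pi.single_eq_of_ne (σ.injective.ne hx), Pi.single_eq_of_ne hx]
      have := congrFun (h σ (Pi.single (σ i) 1)) c
      rw [hv] at this
      exact this
    by_cases hC2 : 2 ≤ C
    · set z : Fin C := ⟨0, by omega⟩ with hz
      set o : Fin C := ⟨1, by omega⟩ with ho
      have hzo : z ≠ o := by simp [hz, ho, Fin.ext_iff]
      set a : ℝ := T (Pi.single z 1) z with ha
      set b : ℝ := T (Pi.single z 1) o with hb
      have single_val : ∀ i c : Fin C,
          T (Pi.single i 1) c = if c = i then a else b := by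
        intro i c
        by_cases hci : c = i
        · subst hci
          rw [if_pos rfl, key (Equiv.swap c z) c c, Equiv.swap_apply_left]
        · rw [if_neg hci]
          set σ₁ : Equiv.Perm (Fin C) := Equiv.swap i z with hσ₁
          set c' : Fin C := σ₁ c with hc'
          have hc'z : c' ≠ z := by
            rw [hc']
            intro hcz
            exact hci (σ₁.injective (by rw [hcz, hσ₁, Equiv.swap_apply_left]))
          set σ : Equiv.Perm (Fin C) := (Equiv.swap c' o) * σ₁ with hσ
          have hσi : σ i = z := by
            rw [hσ]
            simp only [Equiv.Perm.mul_apply, hσ₁, Equiv.swap_apply_left]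
            rw [Equiv.swap_apply_of_ne_of_ne (Ne.symm hc'z) hzo]
          have hσc : σ c = o := by
            rw [hσ]
            simp only [Equiv.Perm.mul_apply, ← hc']
            exact Equiv.swap_apply_left c' o
          rw [key σ i c, hσi, hσc]
      refine ⟨a - b, b, fun v c => ?_⟩
      have hv : v = ∑ i : Fin C, (v i) • (Pi.single i 1 : Fin C → ℝ) := by
        funext x
        simp [Finset.sum_apply, Pi.single_apply, mul_comm]
      have : T v c = ∑ i : Fin C, v i * (if c = i then a else b) := by
        conv_lhs => rw [hv]
        rw [map_sum]
        simp only [Finset.sum_apply, LinearMap.map_smul, Pi.smul_apply,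
          smul_eq_mul]
        exact Finset.sum_congr rfl fun i _ => by rw [single_val i c]
      rw [this]
      have hsplit : ∀ i : Fin C, v i * (if c = i then a else b)
          = v i * b + (if c = i then v i * (a - b) else 0) := by
        intro i; split <;> ring
      rw [Finset.sum_congr rfl fun i _ => hsplit i, Finset.sum_add_distrib,
        Finset.sum_ite_eq Finset.univ c (fun i => v i * (a - b)),
        if_pos (Finset.mem_univ c), ← Finset.sum_mul]
      ring
    · have hC1 : C = 1 := by omega
      subst hC1
      refine ⟨T (fun _ => 1) 0, 0, fun v c => ?_⟩
      have hc : c = 0 := Subsingleton.elim _ _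
      have hv : v = (v 0) • (fun _ => (1:ℝ)) := by
        funext x
        have : x = 0 := Subsingleton.elim _ _
        simp [this]
      subst hc
      conv_lhs => rw [hv]
      simp [mul_comm]
  · rintro ⟨α, β, hab⟩ σ v
    funext c
    rw [hab, hab]
    have : ∑ j : Fin C, v (σ j) = ∑ j : Fin C, v j := Equiv.sum_comp σ v
    rw [this]
end
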